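/- arXiv:1910.13994 — 2 statements merged into one kernel-verified Lean document; each statement's English description precedes it below -/
import Mathlib

section
/- Let f(z) = a_0 + a_1 z + ... + a_n z^n be a polynomial of degree n with all a_j nonzero, and let g be the forward rotation of f. If |f(z)| + |g(z)| > |a_n|·|z^{n+1} − 1| holds for all z on the unit circle, then N(g) = N(f) + 1, where N counts zeros in the open unit disk with multiplicity. -/
/-!
On the unit circle `z f(z) - g(z) = a_n (z^{n+1} - 1)`, so the hypothesis is the symmetric Rouché
condition `|g - z f| < |g| + |z f|`. It keeps every member of the segment `(1 - t) g + t z f` from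
vanishing on the circle, so by the argument principle the number of zeros in the disk is a
continuous integer-valued function of `t`, hence constant; and `z f` has one more zero there
than `f`.
-/

open Polynomial

/-- Number of zeros of a polynomial in the open unit disk, counted with multiplicity. -/
noncomputable def diskZeros (h : Polynomial ℂ) : ℕ :=
  (h.roots.filter (fun z => ‖z‖ < 1)).card

open Metric Complex Set Real

noncomputable def forwardRotation {R : Type*} [Semiring R] (f : R[X]) (n : ℕ) : R[X] :=
  C (f.coeff n) + ∑ j ∈ Finset.range n, C (f.coeff j) * X ^ (j + 1)

theorem X_mul_sub_forwardRotation {R : Type*} [CommRing R] {f : R[X]} {n : ℕ}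
    (hf : f.natDegree = n) :
    X * f - forwardRotation f n = C (f.coeff n) * (X ^ (n + 1) - 1) := by
  have hshift : X * ∑ j ∈ Finset.range n, C (f.coeff j) * X ^ j =
      ∑ j ∈ Finset.range n, C (f.coeff j) * X ^ (j + 1) := by
    rw [Finset.mul_sum]
    exact Finset.sum_congr rfl fun j _ ↦ by ring
  have hf_sum := f.as_sum_range_C_mul_X_pow
  rw [hf, Finset.sum_range_succ] at hf_sum
  rw [forwardRotation]
  linear_combination X * hf_sum + hshift

theorem one_sub_smul_add_smul_ne_zero {E : Type*} [SeminormedAddCommGroup E] [NormedSpace ℝ E]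
    {a b : E} (hab : ‖a - b‖ < ‖a‖ + ‖b‖) {t : ℝ} (ht₀ : 0 ≤ t) (ht₁ : t ≤ 1) :
    (1 - t) • a + t • b ≠ 0 := by
  intro h
  have ha : ‖a‖ = t * ‖a - b‖ := calc
    ‖a‖ = ‖t • (a - b)‖ := by congr 1; linear_combination (norm := module) h
    _ = t * ‖a - b‖ := by rw [norm_smul, Real.norm_of_nonneg ht₀]
  have hb : ‖b‖ = (1 - t) * ‖a - b‖ := calc
    ‖b‖ = ‖(1 - t) • (b - a)‖ := by congr 1; linear_combination (norm := module) h
    _ = (1 - t) * ‖a - b‖ := by rw [norm_smul, Real.norm_of_nonneg (sub_nonneg.2 ht₁), norm_sub_rev]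
  exact hab.ne (by rw [ha, hb]; ring)

section ArgumentPrinciple

variable {c : ℂ} {R : ℝ}

theorem circleIntegral_sub_inv_of_notMem_closedBall (hR : 0 ≤ R) {w : ℂ}
    (hw : w ∉ closedBall c R) : ∮ z in C(c, R), (z - w)⁻¹ = 0 := by
  have hd : ∀ z ∈ closedBall c R, DifferentiableAt ℂ (fun z ↦ (z - w)⁻¹) z := fun z hz ↦
    (differentiableAt_id.sub_const w).inv (sub_ne_zero.2 (ne_of_mem_of_not_mem hz hw))
  exact circleIntegral_eq_zero_of_differentiable_on_off_countable hR countable_empty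
    (fun z hz ↦ (hd z hz).continuousAt.continuousWithinAt)
    fun z hz ↦ hd z (ball_subset_closedBall hz.1)

theorem circleIntegral_sub_inv_of_notMem_sphere (hR : 0 ≤ R) {w : ℂ} (hw : w ∉ sphere c R) :
    ∮ z in C(c, R), (z - w)⁻¹ = if dist w c < R then 2 * π * I else 0 := by
  split_ifs with hball
  · exact circleIntegral.integral_sub_inv_of_mem_ball hball
  · refine circleIntegral_sub_inv_of_notMem_closedBall hR fun hcl ↦ ?_
    rw [← ball_union_sphere] at hcl
    exact hcl.elim hball hw

theorem circleIntegral_multiset_sum_inv_sub (hR : 0 ≤ R) (s : Multiset ℂ)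
    (hs : ∀ w ∈ s, w ∉ sphere c R) :
    ∮ z in C(c, R), (s.map fun w ↦ (z - w)⁻¹).sum =
      2 * π * I * (s.filter (dist · c < R)).card := by
  induction s using Multiset.induction_on with
  | empty => simp [circleIntegral]
  | cons w s ih =>
    have hw := hs w (Multiset.mem_cons_self w s)
    have hs' := fun v hv ↦ hs v (Multiset.mem_cons_of_mem hv)
    have hcont : ∀ v ∉ sphere c R, ContinuousOn (fun z ↦ (z - v)⁻¹) (sphere c R) :=
      fun v hv ↦ (continuousOn_id.sub continuousOn_const).inv₀ fun z hz ↦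
        sub_ne_zero.2 (ne_of_mem_of_not_mem hz hv)
    simp only [Multiset.map_cons, Multiset.sum_cons]
    rw [circleIntegral.integral_add ((hcont w hw).circleIntegrable hR)
      ((continuousOn_multiset_sum s fun v hv ↦ hcont v (hs' v hv)).circleIntegrable hR),
      circleIntegral_sub_inv_of_notMem_sphere hR hw, ih hs', Multiset.filter_cons]
    split_ifs <;> simp only [Multiset.card_add, Multiset.card_singleton, Multiset.card_zero] <;>
      push_cast <;> ring

theorem circleIntegral_derivative_div_eq (hR : 0 ≤ R) {p : ℂ[X]}
    (hp : ∀ z ∈ sphere c R, p.eval z ≠ 0) :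
    ∮ z in C(c, R), p.derivative.eval z / p.eval z =
      2 * π * I * (p.roots.filter (dist · c < R)).card := by
  have hroots : ∀ w ∈ p.roots, w ∉ sphere c R := fun w hw hsph ↦
    hp w hsph (isRoot_of_mem_roots hw)
  rw [← circleIntegral_multiset_sum_inv_sub hR _ hroots]
  refine circleIntegral.integral_congr hR fun z hz ↦ ?_
  simpa only [one_div] using (IsAlgClosed.splits p).eval_derivative_div_eval_of_ne_zero (hp z hz)

theorem continuous_circleIntegral {X E : Type*} [TopologicalSpace X] [NormedAddCommGroup E]
    [NormedSpace ℂ E] (hR : 0 ≤ R) {F : X → ℂ → E}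
    (hF : ContinuousOn (Function.uncurry F) (univ ×ˢ sphere c R)) :
    Continuous fun x ↦ ∮ z in C(c, R), F x z := by
  refine intervalIntegral.continuous_parametric_intervalIntegral_of_continuous' ?_ 0 (2 * π)
  have hcircle : Continuous fun q : X × ℝ ↦ (q.1, circleMap c R q.2) := by fun_prop
  simp only [deriv_circleMap]
  exact (by fun_prop : Continuous fun q : X × ℝ ↦ circleMap 0 R q.2 * I).smul
    (hF.comp_continuous hcircle fun q ↦ ⟨mem_univ _, circleMap_mem_sphere c hR q.2⟩)

end ArgumentPrinciple

theorem PreconnectedSpace.eq_of_continuous_natCast {X : Type*} [TopologicalSpace X]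
    [PreconnectedSpace X] {N : X → ℕ} (hN : Continuous fun x ↦ (N x : ℂ)) (x y : X) :
    N x = N y := by
  have hemb := isometry_ofReal.isEmbedding.comp Nat.isClosedEmbedding_coe_real.isEmbedding
  refine PreconnectedSpace.constant inferInstance (hemb.continuous_iff.2 ?_)
  simpa [Function.comp_def] using hN

theorem card_roots_filter_eq_of_norm_sub_lt {c : ℂ} {R : ℝ} (hR : 0 ≤ R) {p q : ℂ[X]}
    (h : ∀ z ∈ sphere c R, ‖p.eval z - q.eval z‖ < ‖p.eval z‖ + ‖q.eval z‖) :
    (p.roots.filter (dist · c < R)).card = (q.roots.filter (dist · c < R)).card := by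
  let H : unitInterval → ℂ[X] := fun t ↦ (1 - (t : ℝ)) • p + (t : ℝ) • q
  have hH : ∀ t z, (H t).eval z = (1 - (t : ℝ)) • p.eval z + (t : ℝ) • q.eval z := by
    simp [H, eval_smul]
  have hH' : ∀ t z, (H t).derivative.eval z =
      (1 - (t : ℝ)) • p.derivative.eval z + (t : ℝ) • q.derivative.eval z := by
    simp [H, eval_smul]
  have hne : ∀ t, ∀ z ∈ sphere c R, (H t).eval z ≠ 0 := fun t z hz ↦
    hH t z ▸ one_sub_smul_add_smul_ne_zero (h z hz) t.2.1 t.2.2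
  have hcount : ∀ t, (((H t).roots.filter (dist · c < R)).card : ℂ) =
      (2 * π * I)⁻¹ * ∮ z in C(c, R), (H t).derivative.eval z / (H t).eval z := fun t ↦ by
    rw [circleIntegral_derivative_div_eq hR (hne t), inv_mul_cancel_left₀ (by simp [pi_ne_zero])]
  have hcont : ContinuousOn (fun tz : unitInterval × ℂ ↦
      (H tz.1).derivative.eval tz.2 / (H tz.1).eval tz.2) (univ ×ˢ sphere c R) := by
    simp only [hH, hH']
    exact ContinuousOn.div (by fun_prop) (by fun_prop) fun tz htz ↦ hH tz.1 tz.2 ▸ hne _ _ htz.2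
  have hconst := PreconnectedSpace.eq_of_continuous_natCast (N := fun t ↦
    ((H t).roots.filter (dist · c < R)).card)
    (by simp only [hcount]; exact continuous_const.mul (continuous_circleIntegral hR hcont)) 0 1
  simpa [H] using hconst

theorem diskZeros_eq_card_filter_dist (p : ℂ[X]) :
    diskZeros p = (p.roots.filter (dist · 0 < 1)).card := by
  simp only [dist_zero_right, diskZeros]

theorem diskZeros_X_mul {p : ℂ[X]} (hp : p ≠ 0) : diskZeros (X * p) = diskZeros p + 1 := by
  rw [diskZeros, roots_mul (mul_ne_zero X_ne_zero hp), roots_X, Multiset.filter_add,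
    Multiset.filter_singleton]
  simp [diskZeros, add_comm]

theorem stmt_3_general (f : Polynomial ℂ) (n : ℕ) (hdeg : f.natDegree = n)
    (hbig : ∀ z : ℂ, ‖z‖ = 1 →
      ‖f.coeff n‖ * ‖z ^ (n + 1) - 1‖ <
        ‖f.eval z‖ +
          ‖(C (f.coeff n) + ∑ j ∈ Finset.range n,
            C (f.coeff j) * X ^ (j + 1)).eval z‖) :
    diskZeros (C (f.coeff n) + ∑ j ∈ Finset.range n, C (f.coeff j) * X ^ (j + 1)) =
      diskZeros f + 1 := by
  change ∀ z : ℂ, ‖z‖ = 1 → _ < _ + ‖(forwardRotation f n).eval z‖ at hbig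
  change diskZeros (forwardRotation f n) = _
  have hf : f ≠ 0 := by
    rintro rfl
    simpa [forwardRotation] using hbig 1 norm_one
  rw [← diskZeros_X_mul hf, diskZeros_eq_card_filter_dist, diskZeros_eq_card_filter_dist]
  refine card_roots_filter_eq_of_norm_sub_lt zero_le_one fun z hz ↦ ?_
  rw [mem_sphere_zero_iff_norm] at hz
  have hrot : z * f.eval z - (forwardRotation f n).eval z = f.coeff n * (z ^ (n + 1) - 1) := by
    simpa using congrArg (eval z) (X_mul_sub_forwardRotation hdeg)
  calc ‖(forwardRotation f n).eval z - (X * f).eval z‖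
      = ‖f.coeff n‖ * ‖z ^ (n + 1) - 1‖ := by rw [eval_mul, eval_X, norm_sub_rev, hrot, norm_mul]
    _ < ‖f.eval z‖ + ‖(forwardRotation f n).eval z‖ := hbig z hz
    _ = ‖(forwardRotation f n).eval z‖ + ‖(X * f).eval z‖ := by
      rw [eval_mul, eval_X, norm_mul, hz, one_mul, add_comm]

theorem stmt_3 (f : Polynomial ℂ) (n : ℕ) (hdeg : f.natDegree = n)
    (hcoeff : ∀ j ≤ n, f.coeff j ≠ 0)
    (hbig : ∀ z : ℂ, ‖z‖ = 1 →
      ‖f.coeff n‖ * ‖z ^ (n + 1) - 1‖ <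
        ‖f.eval z‖ +
          ‖(C (f.coeff n) + ∑ j ∈ Finset.range n,
            C (f.coeff j) * X ^ (j + 1)).eval z‖) :
    diskZeros (C (f.coeff n) + ∑ j ∈ Finset.range n, C (f.coeff j) * X ^ (j + 1)) =
      diskZeros f + 1 :=
  stmt_3_general f n hdeg hbig
end

section
/- The Newman polynomial f(z) = 1 + z³ + z⁷ + z⁸ + z⁹ satisfies: f has exactly 5 zeros in the open unit disk, f(−1) = −1, and |f(z)| > 1 for every z on the unit circle with z ≠ −1. -/
/-!
On the unit circle, with `x = (1 + Re z) / 2`, one has `|f(z)|² = 1 + x Q(x)` for an explicit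
octic `Q` that is at least `1/5` on `[0, 1]` (a sum-of-squares certificate), so `|f| ≥ 1` on the
circle, with equality only at `z = -1`.

The zeros in the disk are counted by Rouché's theorem for polynomials, a consequence of the
argument principle: if `p / q` avoids `(-∞, 0]` on a circle, then `log (p / q)` is a primitive of
`p'/p - q'/q` along it, so `p` and `q` have equally many zeros inside. The product `H` of the
`X - c` over four-decimal approximations `c` of the nine zeros of `f` satisfies
`|H - f| < 1 ≤ |f|` on the circle, and exactly five of the `c` lie in the disk.
-/

open Polynomial

open Complex Metric Real ComplexConjugate

section ArgumentPrinciple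

variable {c : ℂ} {R : ℝ}

theorem circleIntegral_logDeriv_eq_zero_of_mem_slitPlane {h : ℂ → ℂ} (hR : 0 ≤ R)
    (hd : ∀ z ∈ sphere c R, DifferentiableAt ℂ h z)
    (hs : ∀ z ∈ sphere c R, h z ∈ slitPlane) :
    ∮ z in C(c, R), logDeriv h z = 0 :=
  circleIntegral.integral_eq_zero_of_hasDerivWithinAt hR fun z hz => by
    simpa only [logDeriv_apply, div_eq_inv_mul] using
      ((hasDerivAt_log (hs z hz)).comp z (hd z hz).hasDerivAt).hasDerivWithinAt

open scoped Classical in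
theorem circleIntegral_sub_inv_eq_ite (hR : 0 ≤ R) {w : ℂ} (hw : w ∉ sphere c R) :
    ∮ z in C(c, R), (z - w)⁻¹ = if w ∈ ball c R then 2 * π * I else 0 := by
  split_ifs with hball
  · exact circleIntegral.integral_sub_inv_of_mem_ball hball
  · have hout : w ∉ closedBall c R := by
      rw [← ball_union_sphere]; exact fun h => h.elim hball hw
    refine DiffContOnCl.circleIntegral_eq_zero hR
      (DifferentiableOn.diffContOnCl_ball ?_ subset_rfl)
    exact (differentiableOn_id.sub_const w).inv fun z hz =>
      sub_ne_zero.2 (ne_of_mem_of_not_mem hz hout)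

open scoped Classical in
theorem circleIntegral_multiset_sum_sub_inv (hR : 0 ≤ R) (s : Multiset ℂ)
    (hs : ∀ w ∈ s, w ∉ sphere c R) :
    ∮ z in C(c, R), (s.map fun w => (z - w)⁻¹).sum
      = 2 * π * I * (s.filter (· ∈ ball c R)).card := by
  induction s using Multiset.induction_on with
  | empty => simp [circleIntegral]
  | cons a s ih =>
    have ha := hs a (Multiset.mem_cons_self a s)
    have hs' := fun w hw => hs w (Multiset.mem_cons_of_mem hw)
    have hint : CircleIntegrable (fun z => (s.map fun w => (z - w)⁻¹).sum) c R :=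
      ContinuousOn.circleIntegrable hR <| continuousOn_multiset_sum s fun w hw =>
        (continuousOn_id.sub continuousOn_const).inv₀ fun z hz =>
          sub_ne_zero.2 (ne_of_mem_of_not_mem hz (hs' w hw))
    simp only [Multiset.map_cons, Multiset.sum_cons]
    rw [circleIntegral.integral_add _ hint, circleIntegral_sub_inv_eq_ite hR ha, ih hs']
    · by_cases hin : a ∈ ball c R
      · rw [if_pos hin, Multiset.filter_cons_of_pos _ hin, Multiset.card_cons]; push_cast; ring
      · rw [if_neg hin, Multiset.filter_cons_of_neg _ hin, zero_add]
    · exact circleIntegrable_sub_inv_iff.2 (Or.inr (by rwa [abs_of_nonneg hR]))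

end ArgumentPrinciple

namespace Polynomial

variable {c : ℂ} {R : ℝ}

theorem logDeriv_eval {𝕜 : Type*} [NontriviallyNormedField 𝕜] (p : 𝕜[X]) :
    logDeriv (p.eval ·) = fun z => p.derivative.eval z / p.eval z := by
  ext z
  rw [logDeriv_apply, Polynomial.deriv]

open scoped Classical in
theorem circleIntegral_logDeriv_eval (hR : 0 ≤ R) (p : ℂ[X])
    (hp : ∀ z ∈ sphere c R, p.eval z ≠ 0) :
    ∮ z in C(c, R), logDeriv (p.eval ·) z
      = 2 * π * I * (p.roots.filter (· ∈ ball c R)).card := by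
  rw [← circleIntegral_multiset_sum_sub_inv hR p.roots fun w hw hs =>
    hp w hs (isRoot_of_mem_roots hw)]
  refine circleIntegral.integral_congr hR fun z hz => ?_
  simp only [logDeriv_eval, (IsAlgClosed.splits p).eval_derivative_div_eval_of_ne_zero (hp z hz),
    one_div]

open scoped Classical in
theorem card_roots_filter_ball_eq_of_div_mem_slitPlane (hR : 0 ≤ R) (p q : ℂ[X])
    (h : ∀ z ∈ sphere c R, p.eval z / q.eval z ∈ slitPlane) :
    (p.roots.filter (· ∈ ball c R)).card = (q.roots.filter (· ∈ ball c R)).card := by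
  have hpq z (hz : z ∈ sphere c R) := div_ne_zero_iff.1 (slitPlane_ne_zero (h z hz))
  have hint (r : ℂ[X]) (hr : ∀ z ∈ sphere c R, r.eval z ≠ 0) :
      CircleIntegrable (logDeriv (r.eval ·)) c R := by
    rw [logDeriv_eval]
    exact (r.derivative.continuous.continuousOn.div r.continuous.continuousOn hr).circleIntegrable
      hR
  have hzero : ∮ z in C(c, R), (logDeriv (p.eval ·) z - logDeriv (q.eval ·) z) = 0 := by
    rw [← circleIntegral_logDeriv_eq_zero_of_mem_slitPlane hR
      (fun z hz => p.differentiableAt.div q.differentiableAt (hpq z hz).2) h]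
    refine circleIntegral.integral_congr hR fun z hz => ?_
    exact (logDeriv_div z (hpq z hz).1 (hpq z hz).2 p.differentiableAt q.differentiableAt).symm
  have hp z hz := (hpq z hz).1
  have hq z hz := (hpq z hz).2
  rw [circleIntegral.integral_sub (hint p hp) (hint q hq), sub_eq_zero,
    circleIntegral_logDeriv_eval hR p hp, circleIntegral_logDeriv_eval hR q hq] at hzero
  exact_mod_cast mul_left_cancel₀ two_pi_I_ne_zero hzero

end Polynomial

theorem div_mem_slitPlane_of_norm_sub_lt {a b : ℂ} (h : ‖a - b‖ < ‖b‖) :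
    a / b ∈ slitPlane := by
  have hb : 0 < ‖b‖ := (norm_nonneg _).trans_lt h
  rw [show a / b = 1 + (a - b) / b by field_simp [norm_pos_iff.1 hb]; ring]
  exact mem_slitPlane_of_norm_lt_one (by rwa [norm_div, div_lt_one hb])

theorem neg_one_lt_re_of_norm_eq_one {z : ℂ} (hz : ‖z‖ = 1) (hne : z ≠ -1) : -1 < z.re := by
  have hre := abs_le.1 (hz ▸ abs_re_le_norm z)
  refine hre.1.lt_of_ne fun h => hne (Complex.ext (by simp [← h]) ?_)
  have : |z.re| = ‖z‖ := by rw [← h, hz]; norm_num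
  simpa using abs_re_eq_norm.1 this

theorem norm_sum_mul_pow_le {n : ℕ} (d : Fin n → ℝ) {z : ℂ} (hz : ‖z‖ ≤ 1) :
    ‖∑ k, (d k : ℂ) * z ^ (k : ℕ)‖ ≤ ∑ k, |d k| :=
  (norm_sum_le _ _).trans <| Finset.sum_le_sum fun k _ => by
    rw [norm_mul, norm_pow, norm_real, Real.norm_eq_abs]
    exact mul_le_of_le_one_right (abs_nonneg _) (pow_le_one₀ (norm_nonneg z) hz)

noncomputable def newmanPoly : ℂ[X] := 1 + X ^ 3 + X ^ 7 + X ^ 8 + X ^ 9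

@[simp]
theorem eval_newmanPoly (z : ℂ) : newmanPoly.eval z = 1 + z ^ 3 + z ^ 7 + z ^ 8 + z ^ 9 := by
  simp [newmanPoly]

def newmanQ {K : Type*} [CommRing K] (x : K) : K :=
  184 - 5280 * x + 59136 * x ^ 2 - 329472 * x ^ 3 + 1025024 * x ^ 4 - 1863680 * x ^ 5
    + 1966080 * x ^ 6 - 1114112 * x ^ 7 + 262144 * x ^ 8

theorem eval_newmanPoly_mul_eval_inv {z : ℂ} (hz : z ≠ 0) :
    newmanPoly.eval z * newmanPoly.eval z⁻¹
      = 1 + (2 + z + z⁻¹) / 4 * newmanQ ((2 + z + z⁻¹) / 4) := by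
  simp only [eval_newmanPoly, newmanQ]
  field_simp
  ring

theorem sq_norm_eval_newmanPoly {z : ℂ} (hz : ‖z‖ = 1) :
    ‖newmanPoly.eval z‖ ^ 2 = 1 + (1 + z.re) / 2 * newmanQ ((1 + z.re) / 2) := by
  have hz0 : z ≠ 0 := norm_ne_zero_iff.1 (hz ▸ one_ne_zero)
  have hconj : conj (newmanPoly.eval z) = newmanPoly.eval z⁻¹ := by
    simp [inv_eq_conj hz]
  have hre : (((1 + z.re) / 2 : ℝ) : ℂ) = (2 + z + z⁻¹) / 4 := by
    rw [inv_eq_conj hz, add_assoc, add_conj]; push_cast; ring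
  apply ofReal_injective
  rw [ofReal_pow, ← mul_conj', hconj, eval_newmanPoly_mul_eval_inv hz0, ← hre]
  simp [newmanQ]

theorem newmanQ_ge {x : ℝ} (h0 : 0 ≤ x) (h1 : x ≤ 1) : 1 / 5 ≤ newmanQ x := by
  -- `newmanQ x` minus the two squares below is `≈ 0.3` plus terms of total size `< 0.005`.
  have hpow (k : ℕ) : 0 ≤ x ^ k ∧ x ^ k ≤ 1 := ⟨pow_nonneg h0 k, pow_le_one₀ h0 h1⟩
  have hA := sq_nonneg (14211977 / 1048576 - 103296711 / 524288 * x
    + 802203633 / 1048576 * x ^ 2 - 1142116231 / 1048576 * x ^ 3 + 134349697 / 262144 * x ^ 4)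
  have hB := mul_nonneg (mul_nonneg h0 (sub_nonneg.2 h1)) (sq_nonneg (8171931 / 1048576
    - 12088353 / 524288 * x + 5242771 / 131072 * x ^ 2 - 23813473 / 1048576 * x ^ 3))
  unfold newmanQ
  linarith [hpow 1, hpow 2, hpow 3, hpow 4, hpow 5, hpow 6, hpow 7, hpow 8]

theorem one_le_norm_eval_newmanPoly {z : ℂ} (hz : ‖z‖ = 1) :
    1 ≤ ‖newmanPoly.eval z‖ := by
  have hre := abs_le.1 (hz ▸ abs_re_le_norm z)
  have hQ := newmanQ_ge (x := (1 + z.re) / 2) (by linarith) (by linarith)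
  rw [← one_le_sq_iff₀ (norm_nonneg _), sq_norm_eval_newmanPoly hz]
  nlinarith

theorem one_lt_norm_eval_newmanPoly {z : ℂ} (hz : ‖z‖ = 1) (hne : z ≠ -1) :
    1 < ‖newmanPoly.eval z‖ := by
  have hre := neg_one_lt_re_of_norm_eq_one hz hne
  have hQ := newmanQ_ge (x := (1 + z.re) / 2) (by linarith) (by linarith [re_le_norm z])
  rw [← one_lt_sq_iff₀ (norm_nonneg _), sq_norm_eval_newmanPoly hz]
  nlinarith

def conjPair (a b : ℝ) : Multiset ℂ := {⟨a, b⟩, ⟨a, -b⟩}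

theorem normSq_of_mem_conjPair {a b : ℝ} {w : ℂ} (hw : w ∈ conjPair a b) :
    normSq w = a ^ 2 + b ^ 2 := by
  simp only [conjPair, Multiset.insert_eq_cons, Multiset.mem_cons, Multiset.mem_singleton] at hw
  rcases hw with rfl | rfl <;> simp [normSq_mk] <;> ring

theorem prod_map_sub_conjPair (a b : ℝ) (z : ℂ) :
    ((conjPair a b).map (z - ·)).prod = z ^ 2 - 2 * a * z + (a ^ 2 + b ^ 2) := by
  simp only [conjPair, Multiset.insert_eq_cons, Multiset.map_cons, Multiset.map_singleton,
    Multiset.prod_cons, Multiset.prod_singleton, mk_eq_add_mul_I]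
  push_cast
  linear_combination (-(b : ℂ) ^ 2) * I_sq

noncomputable def newmanApproxRootsIn : Multiset ℂ :=
  {((-0.8713 : ℝ) : ℂ)} + conjPair 0.3439 0.7683 + conjPair 0.8141 0.4137

noncomputable def newmanApproxRootsOut : Multiset ℂ :=
  conjPair (-0.9253) 0.7111 + conjPair (-0.2971) 1.1567

noncomputable def newmanApprox : ℂ[X] :=
  ((newmanApproxRootsIn + newmanApproxRootsOut).map (X - C ·)).prod

noncomputable def newmanApproxErr : Fin 9 → ℝ :=
  ![-1311128413267275172176168939 / 20000000000000000000000000000000,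
    978840440094048080592393 / 50000000000000000000000000000,
    -35159338297592031941 / 3125000000000000000000000,
    -227647717450260653 / 1250000000000000000000,
    -3890713835073643 / 12500000000000000000,
    -279980203693 / 1250000000000000,
    -2160249 / 31250000000,
    1179 / 12500000,
    1 / 10000]

theorem eval_newmanApprox (z : ℂ) :
    newmanApprox.eval z = newmanPoly.eval z + ∑ k, (newmanApproxErr k : ℂ) * z ^ (k : ℕ) := by
  rw [newmanApprox, eval_multiset_prod, Multiset.map_map]
  simp only [Function.comp_def, eval_sub, eval_X, eval_C, newmanApproxRootsIn,
    newmanApproxRootsOut, Multiset.map_add, Multiset.prod_add, prod_map_sub_conjPair]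
  simp [Fin.sum_univ_succ, newmanApproxErr]
  ring

theorem norm_eval_newmanApprox_sub_lt {z : ℂ} (hz : ‖z‖ = 1) :
    ‖newmanApprox.eval z - newmanPoly.eval z‖ < 1 := by
  rw [eval_newmanApprox, add_sub_cancel_left]
  refine (norm_sum_mul_pow_le newmanApproxErr hz.le).trans_lt ?_
  norm_num [Fin.sum_univ_succ, newmanApproxErr]

open scoped Classical in
theorem card_filter_roots_newmanApprox :
    (newmanApprox.roots.filter (· ∈ ball 0 1)).card = 5 := by
  rw [newmanApprox, roots_multiset_prod_X_sub_C, Multiset.filter_add,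
    Multiset.filter_eq_self.2, Multiset.filter_eq_nil.2]
  · rfl
  · intro w hw
    rw [mem_ball_zero_iff, not_lt, ← one_le_sq_iff₀ (norm_nonneg w), Complex.sq_norm]
    simp only [newmanApproxRootsOut, Multiset.mem_add] at hw
    rcases hw with hw | hw <;> rw [normSq_of_mem_conjPair hw] <;> norm_num
  · intro w hw
    rw [mem_ball_zero_iff, ← sq_lt_one_iff₀ (norm_nonneg w), Complex.sq_norm]
    simp only [newmanApproxRootsIn, Multiset.mem_add, Multiset.mem_singleton] at hw
    rcases hw with (rfl | hw) | hw
    · norm_num [normSq_ofReal]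
    all_goals rw [normSq_of_mem_conjPair hw]; norm_num

theorem diskZeros_newmanPoly : diskZeros newmanPoly = 5 := by
  classical
  have hrouche := card_roots_filter_ball_eq_of_div_mem_slitPlane zero_le_one newmanApprox newmanPoly
    fun z hz => by
      rw [mem_sphere_zero_iff_norm] at hz
      exact div_mem_slitPlane_of_norm_sub_lt
        ((norm_eval_newmanApprox_sub_lt hz).trans_le (one_le_norm_eval_newmanPoly hz))
  rw [diskZeros, ← card_filter_roots_newmanApprox, hrouche]
  exact congrArg _ (Multiset.filter_congr fun z _ => mem_ball_zero_iff.symm)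

theorem stmt_12 :
    diskZeros (1 + X ^ 3 + X ^ 7 + X ^ 8 + X ^ 9 : Polynomial ℂ) = 5 ∧
    (1 + X ^ 3 + X ^ 7 + X ^ 8 + X ^ 9 : Polynomial ℂ).eval (-1) = -1 ∧
    ∀ z : ℂ, ‖z‖ = 1 → z ≠ -1 →
      1 < ‖(1 + X ^ 3 + X ^ 7 + X ^ 8 + X ^ 9 : Polynomial ℂ).eval z‖ :=
  ⟨diskZeros_newmanPoly, by norm_num, fun _ hz hne => one_lt_norm_eval_newmanPoly hz hne⟩
end
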